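/- Let f, g : X → Y with Y path-connected. Then D_m(f, g) ≤ cat_m(X). Moreover, for a path-connected space X and basepoint x_0, D_m(c_{x_0}, id_X) = cat_m(X), where c_{x_0} is the constant map at x_0. -/

import Mathlib

universe u

namespace RelativeCWComplex

/-- The `n`-dimensional sphere (points of norm `1` in `ℝⁿ⁺¹`). -/
noncomputable def sphere (n : ℤ) : TopCat.{u} :=
  TopCat.of <| ULift <| Metric.sphere (0 : EuclideanSpace ℝ <| Fin <| Int.toNat <| n + 1) 1

/-- The `n`-dimensional closed disk (points of norm `≤ 1` in `ℝⁿ`). -/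
noncomputable def disk (n : ℤ) : TopCat.{u} :=
  TopCat.of <| ULift <| Metric.closedBall (0 : EuclideanSpace ℝ <| Fin <| Int.toNat n) 1

/-- The inclusion map from the `n`-sphere to the `(n+1)`-disk. -/
noncomputable def sphereInclusion (n : ℤ) : sphere.{u} n ⟶ disk.{u} (n + 1) :=
  TopCat.ofHom
    ⟨fun p => ULift.up ⟨p.down.1, le_of_eq p.down.2⟩,
      continuous_uliftUp.comp ((continuous_subtype_val.comp continuous_uliftDown).subtype_mk _)⟩

/-- `X'` is obtained from `X` by attaching generalized cells `f : S ⟶ D`. -/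
structure AttachGeneralizedCells {S D : TopCat.{u}} (f : S ⟶ D) (X X' : TopCat.{u}) where
  /-- The index type over the generalized cells -/
  cells : Type u
  /-- An attaching map for each generalized cell -/
  attachMaps : cells → (S ⟶ X)
  /-- `X'` is the pushout of `∐ S ⟶ X` and `∐ S ⟶ ∐ D`. -/
  iso_pushout : X' ≅ CategoryTheory.Limits.pushout (CategoryTheory.Limits.Sigma.desc attachMaps)
    (CategoryTheory.Limits.Sigma.map fun (_ : cells) => f)

/-- `X'` is obtained from `X` by attaching `(n + 1)`-disks. -/
def AttachCells (n : ℤ) := AttachGeneralizedCells (sphereInclusion.{u} n)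

end RelativeCWComplex

/-- A relative CW-complex (as in Mathlib of December 2024). -/
structure RelativeCWComplex where
  /-- The skeletons. -/
  sk : ℕ → TopCat.{u}
  /-- Each `sk (n+1)` is obtained from `sk n` by attaching `n`-disks. -/
  attachCells (n : ℕ) : RelativeCWComplex.AttachCells ((n : ℤ) - 1) (sk n) (sk (n + 1))

/-- A CW-complex is a relative CW-complex whose `sk 0` is empty. -/
structure CWComplex extends RelativeCWComplex.{u} where
  /-- `sk 0` is empty. -/
  isEmpty_sk_zero : IsEmpty (sk 0)

namespace RelativeCWComplex

/-- The inclusion map from `X` to `X'`. -/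
noncomputable def AttachGeneralizedCells.inclusion {S D : TopCat.{u}} {f : S ⟶ D}
    {X X' : TopCat.{u}} (att : AttachGeneralizedCells f X X') : X ⟶ X' :=
  CategoryTheory.CategoryStruct.comp (CategoryTheory.Limits.pushout.inl _ _) att.iso_pushout.inv

/-- The inclusion map from `sk n` to `sk (n+1)`. -/
noncomputable def skInclusion (X : RelativeCWComplex.{u}) (n : ℕ) : X.sk n ⟶ X.sk (n + 1) :=
  (X.attachCells n).inclusion

/-- The topology on a relative CW-complex. -/
noncomputable def toTopCat (X : RelativeCWComplex.{u}) : TopCat.{u} :=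
  CategoryTheory.Limits.colimit (CategoryTheory.Functor.ofSequence X.skInclusion)

end RelativeCWComplex

/-- The underlying topological space of a CW complex. -/
abbrev CWSpace (K : CWComplex.{u}) : Type u := K.toRelativeCWComplex.toTopCat

/-- A CW complex has dimension at most `m` if it has no cells of dimension `> m`. -/
def CWDimLE (K : CWComplex.{u}) (m : ℕ) : Prop :=
  ∀ n : ℕ, m < n →
    IsEmpty (RelativeCWComplex.AttachGeneralizedCells.cells (K.toRelativeCWComplex.attachCells n))

/-- Hurewicz fibration: the homotopy lifting property with respect to all spaces. -/
def IsFibration {E B : Type u} [TopologicalSpace E] [TopologicalSpace B] (p : C(E, B)) : Prop :=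
  ∀ (X : Type u) [TopologicalSpace X] (f : C(X, E)) (H : C(X × unitInterval, B)),
    (∀ x, H (x, 0) = p (f x)) →
    ∃ H' : C(X × unitInterval, E), (∀ z, p (H' z) = H z) ∧ (∀ x, H' (x, 0) = f x)

/-- The inclusion of a subset as a continuous map. -/
def inclMap {X : Type u} [TopologicalSpace X] (U : Set X) : C(U, X) :=
  ⟨Subtype.val, continuous_subtype_val⟩

/-- Property `A_{m,p}`: every map into `U` from an `m`-dimensional CW complex lifts through `p`. -/
def LiftingProp {E B : Type u} [TopologicalSpace E] [TopologicalSpace B]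
    (p : C(E, B)) (m : ℕ) (U : Set B) : Prop :=
  ∀ K : CWComplex.{u}, CWDimLE K m → ∀ φ : C(CWSpace K, U),
    ∃ s : C(CWSpace K, E), ∀ x, p (s x) = (φ x : B)

/-- The `m`-sectional category of `p`, valued in `ℕ∞` (`⊤` if no finite cover exists). -/
noncomputable def secatm {E B : Type u} [TopologicalSpace E] [TopologicalSpace B]
    (p : C(E, B)) (m : ℕ) : ℕ∞ :=
  sInf ((fun n : ℕ => (n : ℕ∞)) ''
    {k : ℕ | ∃ U : Fin (k + 1) → Set B, (∀ i, IsOpen (U i)) ∧ (⋃ i, U i) = Set.univ ∧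
      ∀ i, LiftingProp p m (U i)})

/-- The classical sectional category. -/
noncomputable def secat {E B : Type u} [TopologicalSpace E] [TopologicalSpace B]
    (p : C(E, B)) : ℕ∞ :=
  sInf ((fun n : ℕ => (n : ℕ∞)) ''
    {k : ℕ | ∃ U : Fin (k + 1) → Set B, (∀ i, IsOpen (U i)) ∧ (⋃ i, U i) = Set.univ ∧
      ∀ i, ∃ s : C((U i : Set B), E), ∀ x, p (s x) = (x : B)})

/-- Property `B_m`. -/
def NullProp {X : Type u} [TopologicalSpace X] (m : ℕ) (U : Set X) : Prop :=
  ∀ K : CWComplex.{u}, CWDimLE K m → ∀ φ : C(CWSpace K, U),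
    ((inclMap U).comp φ).Nullhomotopic

/-- The `m`-dimensional Lusternik–Schnirelmann category. -/
noncomputable def catm (X : Type u) [TopologicalSpace X] (m : ℕ) : ℕ∞ :=
  sInf ((fun n : ℕ => (n : ℕ∞)) ''
    {k : ℕ | ∃ U : Fin (k + 1) → Set X, (∀ i, IsOpen (U i)) ∧ (⋃ i, U i) = Set.univ ∧
      ∀ i, NullProp m (U i)})

/-- Classical (normalized) LS category. -/
noncomputable def catLS (X : Type u) [TopologicalSpace X] : ℕ∞ :=
  sInf ((fun n : ℕ => (n : ℕ∞)) ''
    {k : ℕ | ∃ U : Fin (k + 1) → Set X, (∀ i, IsOpen (U i)) ∧ (⋃ i, U i) = Set.univ ∧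
      ∀ i, (inclMap (U i)).Nullhomotopic})

/-- Property `C_{m,f}`. -/
def NullPropMap {X Y : Type u} [TopologicalSpace X] [TopologicalSpace Y]
    (f : C(X, Y)) (m : ℕ) (U : Set X) : Prop :=
  ∀ K : CWComplex.{u}, CWDimLE K m → ∀ φ : C(CWSpace K, U),
    ((f.comp (inclMap U)).comp φ).Nullhomotopic

/-- The `m`-dimensional LS category of a map. -/
noncomputable def catmMap {X Y : Type u} [TopologicalSpace X] [TopologicalSpace Y]
    (f : C(X, Y)) (m : ℕ) : ℕ∞ :=
  sInf ((fun n : ℕ => (n : ℕ∞)) ''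
    {k : ℕ | ∃ U : Fin (k + 1) → Set X, (∀ i, IsOpen (U i)) ∧ (⋃ i, U i) = Set.univ ∧
      ∀ i, NullPropMap f m (U i)})

/-- Property `D_{m,f,g}`. -/
def DistProp {X Y : Type u} [TopologicalSpace X] [TopologicalSpace Y]
    (f g : C(X, Y)) (m : ℕ) (U : Set X) : Prop :=
  ∀ K : CWComplex.{u}, CWDimLE K m → ∀ φ : C(CWSpace K, U),
    ((f.comp (inclMap U)).comp φ).Homotopic ((g.comp (inclMap U)).comp φ)

/-- The `m`-homotopic distance. -/
noncomputable def homDistm {X Y : Type u} [TopologicalSpace X] [TopologicalSpace Y]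
    (f g : C(X, Y)) (m : ℕ) : ℕ∞ :=
  sInf ((fun n : ℕ => (n : ℕ∞)) ''
    {k : ℕ | ∃ U : Fin (k + 1) → Set X, (∀ i, IsOpen (U i)) ∧ (⋃ i, U i) = Set.univ ∧
      ∀ i, DistProp f g m (U i)})


lemma const_homotopic {Z Y : Type u} [TopologicalSpace Z] [TopologicalSpace Y]
    {a b : Y} (h : Joined a b) :
    (ContinuousMap.const Z a).Homotopic (ContinuousMap.const Z b) := by
  obtain ⟨p⟩ := h
  exact ⟨⟨⟨fun z => p z.1, by fun_prop⟩, fun x => p.source, fun x => p.target⟩⟩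

lemma null_to_dist {X Y : Type u} [TopologicalSpace X] [TopologicalSpace Y]
    (f g : C(X, Y)) (hY : PathConnectedSpace Y) (m : ℕ) (U : Set X)
    (h : NullProp m U) : DistProp f g m U := by
  intro K hK φ
  obtain ⟨c, H⟩ := h K hK φ
  have h1 : (f.comp (inclMap U)).comp φ = f.comp ((inclMap U).comp φ) := rfl
  have h2 : (g.comp (inclMap U)).comp φ = g.comp ((inclMap U).comp φ) := rfl
  rw [h1, h2]
  have Hf : (f.comp ((inclMap U).comp φ)).Homotopic
      (ContinuousMap.const (CWSpace K) (f c)) := by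
    have := ContinuousMap.Homotopic.comp (ContinuousMap.Homotopic.refl f) H
    simpa using this
  have Hg : (g.comp ((inclMap U).comp φ)).Homotopic
      (ContinuousMap.const (CWSpace K) (g c)) := by
    have := ContinuousMap.Homotopic.comp (ContinuousMap.Homotopic.refl g) H
    simpa using this
  exact Hf.trans ((const_homotopic (hY.joined (f c) (g c))).trans Hg.symm)

/-- `D_m(f,g) ≤ cat_m(X)` for `Y` path-connected, and `D_m(c_{x₀}, id_X) = cat_m(X)` for
path-connected `X`. -/
theorem stmt16 {X Y : Type u} [TopologicalSpace X] [TopologicalSpace Y] (m : ℕ) :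
    (∀ f g : C(X, Y), PathConnectedSpace Y → homDistm f g m ≤ catm X m) ∧
    (PathConnectedSpace X → ∀ x₀ : X,
      homDistm (ContinuousMap.const X x₀) (ContinuousMap.id X) m = catm X m) := by
  constructor
  · intro f g hY
    apply sInf_le_sInf
    apply Set.image_mono
    rintro k ⟨U, hopen, hcov, hnull⟩
    exact ⟨U, hopen, hcov, fun i => null_to_dist f g hY m (U i) (hnull i)⟩
  · intro hX x₀
    have hsets : {k : ℕ | ∃ U : Fin (k + 1) → Set X, (∀ i, IsOpen (U i)) ∧
        (⋃ i, U i) = Set.univ ∧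
        ∀ i, DistProp (ContinuousMap.const X x₀) (ContinuousMap.id X) m (U i)} =
        {k : ℕ | ∃ U : Fin (k + 1) → Set X, (∀ i, IsOpen (U i)) ∧
        (⋃ i, U i) = Set.univ ∧ ∀ i, NullProp m (U i)} := by
      ext k
      constructor
      · rintro ⟨U, hopen, hcov, hd⟩
        refine ⟨U, hopen, hcov, fun i K hK φ => ?_⟩
        have h := hd i K hK φ
        refine ⟨x₀, ?_⟩
        have e1 : ((ContinuousMap.const X x₀).comp (inclMap (U i))).comp φ =
            ContinuousMap.const (CWSpace K) x₀ := rfl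
        have e2 : ((ContinuousMap.id X).comp (inclMap (U i))).comp φ =
            (inclMap (U i)).comp φ := rfl
        rw [e1, e2] at h
        exact h.symm
      · rintro ⟨U, hopen, hcov, hn⟩
        exact ⟨U, hopen, hcov, fun i =>
          null_to_dist (ContinuousMap.const X x₀) (ContinuousMap.id X) hX m (U i) (hn i)⟩
    unfold homDistm catm
    rw [hsets]
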